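/- With notation as in the construction of B_λ in a tree (T) of hyperbolic metric spaces satisfying the qi-embedded condition: there exists A > 0, depending only on the structural constants, such that for every point a ∈ P^{-1}(v) ∩ B_λ with v in the support tree T₁, there exists b ∈ i_{v₀}(λ) with d(a,b) ≤ A · d_T(P(a), P(b)). -/

import Mathlib

open Metric Set Filter

/-- A geodesic parametrization from `a` to `b`, defined on `[0, dist a b]`. -/
def IsGeodParam {Y : Type*} [MetricSpace Y] (f : ℝ → Y) (a b : Y) : Prop :=
  f 0 = a ∧ f (dist a b) = b ∧
    ∀ s ∈ Set.Icc (0:ℝ) (dist a b), ∀ t ∈ Set.Icc (0:ℝ) (dist a b),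
      dist (f s) (f t) = |s - t|

/-- `σ` is a geodesic segment joining `a` and `b`. -/
def IsGeodSeg {Y : Type*} [MetricSpace Y] (σ : Set Y) (a b : Y) : Prop :=
  ∃ f, IsGeodParam f a b ∧ σ = f '' Set.Icc 0 (dist a b)

/-- A geodesic metric space. -/
def GeodesicSpace (Y : Type*) [MetricSpace Y] : Prop :=
  ∀ a b : Y, ∃ σ : Set Y, IsGeodSeg σ a b

/-- Gromov δ-hyperbolicity via slim triangles. -/
def SlimTriangles (Y : Type*) [MetricSpace Y] (δ : ℝ) : Prop :=
  ∀ a b c : Y, ∀ s₁ s₂ s₃ : Set Y, IsGeodSeg s₁ a b → IsGeodSeg s₂ b c →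
    IsGeodSeg s₃ a c → ∀ x ∈ s₃, ∃ y ∈ s₁ ∪ s₂, dist x y ≤ δ

/-- The Gromov product `(a,b)_c`. -/
noncomputable def gromovProd {Y : Type*} [MetricSpace Y] (c a b : Y) : ℝ :=
  (dist a c + dist b c - dist a b) / 2

/-- `q` is a point of `σ` nearest to `p`. -/
def IsNearestPt {Y : Type*} [MetricSpace Y] (σ : Set Y) (p q : Y) : Prop :=
  q ∈ σ ∧ ∀ z ∈ σ, dist p q ≤ dist p z

/-- A `(K,ε)`-quasigeodesic (quasi-isometric embedding of an interval `I ⊆ ℝ`). -/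
def QuasiGeodesicOn {Y : Type*} [MetricSpace Y] (K ε : ℝ) (f : ℝ → Y) (I : Set ℝ) : Prop :=
  ∀ s ∈ I, ∀ t ∈ I, |s - t| / K - ε ≤ dist (f s) (f t) ∧ dist (f s) (f t) ≤ K * |s - t| + ε

/-- A `(K,ε)`-quasi-isometric embedding. -/
def QIEmbedding {Y Z : Type*} [MetricSpace Y] [MetricSpace Z] (K ε : ℝ) (f : Y → Z) : Prop :=
  ∀ x y : Y, dist x y / K - ε ≤ dist (f x) (f y) ∧ dist (f x) (f y) ≤ K * dist x y + ε

/-- The structural hypotheses of a tree (`T`, realized by a simplicial tree `Gr`) of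
hyperbolic metric spaces satisfying the quasi-isometrically embedded condition:
vertex spaces `Xv v` (δ-hyperbolic geodesic, uniformly properly and 1-Lipschitzly
included in `X` as the fibers of `P`), edge-space images `Ed v w h ⊆ Xv v`
(`C₂`-quasiconvex), and edge identifications `φ` which are `(K,ε)`-quasi-isometric
embeddings moving points distance at most 1 in `X`. -/
def TreeOfSpaces (δ K ε C₂ : ℝ)
    (T : Type) (Gr : SimpleGraph T)
    (X : Type) [MetricSpace X] (P : X → T)
    (Xv : T → Type) [∀ v, MetricSpace (Xv v)]
    (iv : ∀ v, Xv v → X)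
    (Ed : ∀ v w, Gr.Adj v w → Set (Xv v))
    (φ : ∀ v w, Gr.Adj v w → Xv v → Xv w) : Prop :=
  Gr.IsTree ∧
  GeodesicSpace X ∧
  (∀ x y : X, (Gr.dist (P x) (P y) : ℝ) ≤ dist x y) ∧
  (∀ v, Set.range (iv v) = P ⁻¹' {v}) ∧
  (∀ v, Function.Injective (iv v)) ∧
  (∀ v (x y : Xv v), dist (iv v x) (iv v y) ≤ dist x y) ∧
  (∀ M : ℝ, ∃ N : ℝ, ∀ v (x y : Xv v), dist (iv v x) (iv v y) ≤ M → dist x y ≤ N) ∧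
  (∀ v, GeodesicSpace (Xv v)) ∧
  (∀ v, SlimTriangles (Xv v) δ) ∧
  (∀ v w (h : Gr.Adj v w), ∀ a ∈ Ed v w h, ∀ b ∈ Ed v w h,
    ∀ σ : Set (Xv v), IsGeodSeg σ a b → ∀ p ∈ σ, Metric.infDist p (Ed v w h) ≤ C₂) ∧
  (∀ v w (h : Gr.Adj v w), ∀ a ∈ Ed v w h, ∀ b ∈ Ed v w h,
    dist a b / K - ε ≤ dist (φ v w h a) (φ v w h b) ∧
      dist (φ v w h a) (φ v w h b) ≤ K * dist a b + ε) ∧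
  (∀ v w (h : Gr.Adj v w), ∀ a ∈ Ed v w h, φ v w h a ∈ Ed w v h.symm ∧
    φ w v h.symm (φ v w h a) = a ∧ dist (iv v a) (iv w (φ v w h a)) ≤ 1)

/-- Mitra's ladder `B_λ`: the support tree `T₁`, the geodesics `λ_v = lamv v` in the
vertex spaces obtained by propagating the base geodesic `lam ⊆ Xv v₀` across edge
spaces (pushing across an edge only when the projection of a `C`-neighborhood of the
current geodesic to the edge-space image has diameter at least `D`), and
`B = ⋃_{v ∈ T₁} i_v(λ_v)`. -/
def MitraLadder (C D : ℝ)
    (T : Type) (Gr : SimpleGraph T)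
    (X : Type) [MetricSpace X] (P : X → T)
    (Xv : T → Type) [∀ v, MetricSpace (Xv v)]
    (iv : ∀ v, Xv v → X)
    (Ed : ∀ v w, Gr.Adj v w → Set (Xv v))
    (φ : ∀ v w, Gr.Adj v w → Xv v → Xv w)
    (v₀ : T) (lam : Set (Xv v₀)) (a₀ b₀ : Xv v₀)
    (T₁ : Set T) (lamv : ∀ v, Set (Xv v)) (B : Set X) : Prop :=
  IsGeodSeg lam a₀ b₀ ∧ lamv v₀ = lam ∧ v₀ ∈ T₁ ∧
  T₁ = {v : T | ∃ x ∈ B, P x = v} ∧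
  B = ⋃ v ∈ T₁, iv v '' lamv v ∧
  (∀ v ∈ T₁, ∃ a b : Xv v, IsGeodSeg (lamv v) a b) ∧
  -- each non-base vertex of the support tree is obtained from its parent `w` by
  -- pushing a geodesic across the corresponding edge space
  (∀ v ∈ T₁, v ≠ v₀ → ∃ (w : T) (h : Gr.Adj w v), w ∈ T₁ ∧
    Gr.dist v₀ w + 1 = Gr.dist v₀ v ∧
    ∃ p ∈ Ed w v h, ∃ q ∈ Ed w v h,
      Metric.infDist p (lamv w) ≤ C ∧ Metric.infDist q (lamv w) ≤ C ∧
      D ≤ dist p q ∧ IsGeodSeg (lamv v) (φ w v h p) (φ w v h q))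

/-!
Induction on the distance from `v₀`. A vertex `v ≠ v₀` of the support tree has a parent `w`, and
`λ_v` is a geodesic joining `φ p` and `φ q` for points `p, q` of the edge space that are
`C`-close to `λ_w`. Sampling a geodesic `[p, q]` of `X_w` at unit steps and moving the samples
into the quasiconvex edge space gives a chain that `φ` carries to a discrete quasigeodesic from
`φ p` to `φ q`, so by the Morse lemma every point of `λ_v` is uniformly close to the image of some
sample. That sample is `(2δ + C)`-close to `λ_w` by two slim triangles, and `φ` moves points by at
most `1` in `X`. Hence each point of `i_v(λ_v)` lies within a uniform distance `A` of
`i_w(λ_w)`, and these steps add up to `A · d_T(v, v₀)`.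
-/

section Geodesics

variable {Y : Type*} [MetricSpace Y] {f : ℝ → Y} {σ : Set Y} {a b : Y}

lemma IsGeodParam.reverse (h : IsGeodParam f a b) :
    IsGeodParam (fun t => f (dist a b - t)) b a := by
  obtain ⟨h0, hL, hf⟩ := h
  refine ⟨by simpa using hL, by simpa [dist_comm b a] using h0, fun s hs t ht => ?_⟩
  rw [dist_comm b a] at hs ht
  rw [hf _ ⟨by linarith [hs.2], by linarith [hs.1]⟩ _ ⟨by linarith [ht.2], by linarith [ht.1]⟩,
    abs_sub_comm]
  ring_nf

lemma IsGeodParam.isGeodSeg_image_Icc (h : IsGeodParam f a b) {s t : ℝ} (hs : 0 ≤ s)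
    (hst : s ≤ t) (ht : t ≤ dist a b) : IsGeodSeg (f '' Icc s t) (f s) (f t) := by
  obtain ⟨-, -, hf⟩ := h
  have hd : dist (f s) (f t) = t - s := by
    rw [hf s ⟨hs, hst.trans ht⟩ t ⟨hs.trans hst, ht⟩, abs_of_nonpos (by linarith)]
    ring
  refine ⟨fun u => f (s + u), ⟨by simp, by rw [hd]; ring_nf, fun u hu u' hu' => ?_⟩, ?_⟩
  · rw [hd] at hu hu'
    rw [hf (s + u) ⟨by linarith [hu.1], by linarith [hu.2]⟩
      (s + u') ⟨by linarith [hu'.1], by linarith [hu'.2]⟩]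
    ring_nf
  · rw [hd, ← image_image f (s + ·), image_const_add_Icc]
    ring_nf

namespace IsGeodSeg

lemma left_mem (h : IsGeodSeg σ a b) : a ∈ σ := by
  obtain ⟨f, ⟨h0, -, -⟩, rfl⟩ := h
  exact ⟨0, ⟨le_rfl, dist_nonneg⟩, h0⟩

lemma nonempty (h : IsGeodSeg σ a b) : σ.Nonempty :=
  ⟨a, h.left_mem⟩

lemma symm (h : IsGeodSeg σ a b) : IsGeodSeg σ b a := by
  obtain ⟨f, hf, rfl⟩ := h
  refine ⟨_, hf.reverse, ?_⟩
  rw [dist_comm b a, ← image_image f (dist a b - ·), image_const_sub_Icc]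
  simp

lemma dist_left_le (h : IsGeodSeg σ a b) {z : Y} (hz : z ∈ σ) : dist z a ≤ dist a b := by
  obtain ⟨f, ⟨h0, -, hf⟩, rfl⟩ := h
  obtain ⟨t, ht, rfl⟩ := hz
  calc dist (f t) a = dist (f t) (f 0) := by rw [h0]
    _ = t := by rw [hf t ht 0 ⟨le_rfl, dist_nonneg⟩, sub_zero, abs_of_nonneg ht.1]
    _ ≤ dist a b := ht.2

lemma dist_right_le (h : IsGeodSeg σ a b) {z : Y} (hz : z ∈ σ) : dist z b ≤ dist a b :=
  dist_comm a b ▸ h.symm.dist_left_le hz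

lemma eq_of_mem_of_self {c z : Y} (h : IsGeodSeg σ c c) (hz : z ∈ σ) : z = c :=
  dist_le_zero.mp (by simpa using h.dist_left_le hz)

lemma isCompact (h : IsGeodSeg σ a b) : IsCompact σ := by
  obtain ⟨f, ⟨-, -, hf⟩, rfl⟩ := h
  refine isCompact_Icc.image_of_continuousOn (LipschitzOnWith.continuousOn (K := 1) ?_)
  refine LipschitzOnWith.of_dist_le_mul fun s hs t ht => ?_
  rw [hf s hs t ht, Real.dist_eq]
  simp

lemma exists_subsegment (h : IsGeodSeg σ a b) {p q : Y} (hp : p ∈ σ) (hq : q ∈ σ) :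
    ∃ τ ⊆ σ, IsGeodSeg τ p q := by
  obtain ⟨f, hf, rfl⟩ := h
  obtain ⟨s, hs, rfl⟩ := hp
  obtain ⟨t, ht, rfl⟩ := hq
  rcases le_total s t with hst | hts
  · exact ⟨_, image_mono (Icc_subset_Icc hs.1 ht.2), hf.isGeodSeg_image_Icc hs.1 hst ht.2⟩
  · exact ⟨_, image_mono (Icc_subset_Icc ht.1 hs.2),
      (hf.isGeodSeg_image_Icc ht.1 hts hs.2).symm⟩

end IsGeodSeg

end Geodesics

section Hyperbolic

variable {Y : Type*} [MetricSpace Y] {δ : ℝ} {σ : Set Y}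

/-- Bisect the chain and apply slim triangles `m` times. -/
lemma SlimTriangles.exists_near_chain_of_le_two_pow (hG : GeodesicSpace Y)
    (hS : SlimTriangles Y δ) {c : ℝ} (hc : 0 ≤ c) {m n : ℕ} (hn : n ≤ 2 ^ m)
    {x : ℕ → Y} (hx : ∀ i < n, dist (x i) (x (i + 1)) ≤ c) (hσ : IsGeodSeg σ (x 0) (x n))
    {z : Y} (hz : z ∈ σ) : ∃ i ≤ n, dist z (x i) ≤ δ * m + c := by
  induction m generalizing n x σ z with
  | zero =>
    refine ⟨0, Nat.zero_le n, ?_⟩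
    have hzx := hσ.dist_left_le hz
    interval_cases n
    · simpa using (hzx.trans_eq (dist_self _)).trans hc
    · simpa using hzx.trans (hx 0 one_pos)
  | succ m ih =>
    have hδm : δ * m + c + δ = δ * (m + 1 : ℕ) + c := by push_cast; ring
    set k := (n + 1) / 2
    have hk : k ≤ n := by omega
    obtain ⟨σ₁, hσ₁⟩ := hG (x 0) (x k)
    obtain ⟨σ₂, hσ₂⟩ := hG (x k) (x n)
    obtain ⟨y, hy, hzy⟩ := hS _ _ _ σ₁ σ₂ σ hσ₁ hσ₂ hσ z hz
    rcases hy with hy | hy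
    · obtain ⟨i, hi, hyi⟩ := ih (by omega) (fun i hi => hx i (by omega)) hσ₁ hy
      exact ⟨i, by omega, by linarith [dist_triangle z y (x i)]⟩
    · have hσ₂' : IsGeodSeg σ₂ (x (k + 0)) (x (k + (n - k))) := by
        rwa [Nat.add_sub_cancel' hk]
      obtain ⟨i, hi, hyi⟩ := ih (x := fun j => x (k + j)) (by omega)
        (fun i hi => hx (k + i) (by omega)) hσ₂' hy
      exact ⟨k + i, by omega, by linarith [dist_triangle z y (x (k + i))]⟩

lemma SlimTriangles.exists_near_chain (hG : GeodesicSpace Y) (hS : SlimTriangles Y δ)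
    {c : ℝ} (hc : 0 ≤ c) {x : ℕ → Y} {i j : ℕ} (hij : i ≤ j)
    (hx : ∀ k, i ≤ k → k < j → dist (x k) (x (k + 1)) ≤ c) (hσ : IsGeodSeg σ (x i) (x j))
    {z : Y} (hz : z ∈ σ) : ∃ k ∈ Icc i j, dist z (x k) ≤ δ * Nat.clog 2 (j - i) + c := by
  have hσ' : IsGeodSeg σ (x (i + 0)) (x (i + (j - i))) := by rwa [Nat.add_sub_cancel' hij]
  obtain ⟨k, hk, hzk⟩ := hS.exists_near_chain_of_le_two_pow hG hc
    (Nat.le_pow_clog one_lt_two _) (x := fun k => x (i + k)) (fun k hk => hx (i + k) (by omega)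
      (by omega)) hσ' hz
  exact ⟨i + k, ⟨by omega, by omega⟩, hzk⟩

lemma SlimTriangles.exists_near_of_infDist_le (hG : GeodesicSpace Y) (hS : SlimTriangles Y δ)
    (hδ : 0 ≤ δ) {lam : Set Y} {a b : Y} (hlam : IsGeodSeg lam a b) {C : ℝ} {p q : Y}
    (hp : infDist p lam ≤ C) (hq : infDist q lam ≤ C) (hσ : IsGeodSeg σ p q) {z : Y}
    (hz : z ∈ σ) : ∃ y ∈ lam, dist z y ≤ 2 * δ + C := by
  obtain ⟨p₁, hp₁, hpp₁⟩ := hlam.isCompact.exists_infDist_eq_dist hlam.nonempty p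
  obtain ⟨q₁, hq₁, hqq₁⟩ := hlam.isCompact.exists_infDist_eq_dist hlam.nonempty q
  obtain ⟨τ, hτlam, hτ⟩ := hlam.exists_subsegment hp₁ hq₁
  obtain ⟨ν, hν⟩ := hG p q₁
  obtain ⟨ρ, hρ⟩ := hG q₁ q
  obtain ⟨π, hπ⟩ := hG p p₁
  obtain ⟨y₁, hy₁, hzy₁⟩ := hS _ _ _ ν ρ σ hν hρ hσ z hz
  rcases hy₁ with hy₁ | hy₁
  · obtain ⟨y₂, hy₂, hy₁y₂⟩ := hS _ _ _ π τ ν hπ hτ hν y₁ hy₁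
    rcases hy₂ with hy₂ | hy₂
    · refine ⟨p₁, hp₁, ?_⟩
      linarith [dist_triangle4 z y₁ y₂ p₁, hπ.dist_right_le hy₂]
    · exact ⟨y₂, hτlam hy₂, by linarith [dist_triangle z y₁ y₂, infDist_nonneg (x := q) (s := lam)]⟩
  · refine ⟨q₁, hq₁, ?_⟩
    linarith [dist_triangle z y₁ q₁, hρ.dist_left_le hy₁, dist_comm q₁ q]

end Hyperbolic

lemma Nat.clog_two_le_of_le_mul_clog_add {α β : ℝ} (hα : 0 ≤ α) (hβ : 0 ≤ β) {k : ℕ}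
    (hk : (k : ℝ) ≤ α * Nat.clog 2 k + β) : (Nat.clog 2 k : ℝ) ≤ 8 * α + 8 * β + 1 := by
  set M := Nat.clog 2 k
  rcases le_or_gt k 1 with hk1 | hk1
  · simp only [M, Nat.clog_of_right_le_one hk1, Nat.cast_zero]
    positivity
  have hM : 1 ≤ M := Nat.succ_le_of_lt (Nat.clog_pos one_lt_two hk1)
  have hpow : 2 ^ (M - 1) < k := Nat.pow_pred_clog_lt_self one_lt_two hk1
  have hsq : (M + 1) ^ 2 ≤ 8 * 2 ^ (M - 1) := by
    have hhalf : M + 1 ≤ 2 * 2 ^ (M / 2) := by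
      have := Nat.lt_two_pow_self (n := M / 2)
      omega
    calc (M + 1) ^ 2 ≤ (2 * 2 ^ (M / 2)) ^ 2 := Nat.pow_le_pow_left hhalf 2
      _ = 4 * 2 ^ (2 * (M / 2)) := by ring
      _ ≤ 4 * 2 ^ M := by gcongr <;> omega
      _ = 8 * 2 ^ (M - 1) := by rw [← Nat.sub_add_cancel hM, pow_succ, Nat.add_sub_cancel]; ring
  have hsq' : ((M : ℝ) + 1) ^ 2 ≤ 8 * k := by exact_mod_cast hsq.trans (by omega)
  have hM' : (1 : ℝ) ≤ M := by exact_mod_cast hM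
  nlinarith

section QuasiGeodesicChains

variable {Y Z : Type*} [MetricSpace Y] [MetricSpace Z] {K ε : ℝ} {x : ℕ → Y} {n : ℕ}

def IsQuasiGeodChain (K ε : ℝ) (x : ℕ → Y) (n : ℕ) : Prop :=
  ∀ i ≤ n, ∀ j ≤ n, |(i : ℝ) - j| / K - ε ≤ dist (x i) (x j) ∧
    dist (x i) (x j) ≤ K * |(i : ℝ) - j| + ε

namespace IsQuasiGeodChain

lemma dist_succ_le (hx : IsQuasiGeodChain K ε x n) {i : ℕ} (hi : i < n) :
    dist (x i) (x (i + 1)) ≤ K + ε := by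
  simpa using (hx i hi.le (i + 1) hi).2

lemma of_dist_le (hx : IsQuasiGeodChain K ε x n) {y : ℕ → Y} {r : ℝ}
    (hxy : ∀ i ≤ n, dist (x i) (y i) ≤ r) : IsQuasiGeodChain K (ε + 2 * r) y n := by
  intro i hi j hj
  have h₁ := dist_triangle4 (x i) (y i) (y j) (x j)
  have h₂ := dist_triangle4 (y i) (x i) (x j) (y j)
  have := hxy i hi
  have := hxy j hj
  have := hx i hi j hj
  constructor <;> linarith [dist_comm (x j) (y j), dist_comm (y i) (x i)]

lemma map (hx : IsQuasiGeodChain K ε x n) (hε : 0 ≤ ε) {E : Set Y}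
    (hE : ∀ i ≤ n, x i ∈ E) {φ : Y → Z} {K' ε' : ℝ} (hK' : 1 ≤ K')
    (hφ : ∀ a ∈ E, ∀ b ∈ E, dist a b / K' - ε' ≤ dist (φ a) (φ b) ∧
      dist (φ a) (φ b) ≤ K' * dist a b + ε') :
    IsQuasiGeodChain (K * K') (K' * ε + ε') (φ ∘ x) n := by
  intro i hi j hj
  obtain ⟨hlo, hup⟩ := hx i hi j hj
  obtain ⟨hφlo, hφup⟩ := hφ _ (hE i hi) _ (hE j hj)
  have hK'0 : 0 < K' := one_pos.trans_le hK'
  constructor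
  · have hε' : ε / K' ≤ K' * ε := (div_le_self hε hK').trans (le_mul_of_one_le_left hε hK')
    calc |(i : ℝ) - j| / (K * K') - (K' * ε + ε')
        ≤ (|(i : ℝ) - j| / K - ε) / K' - ε' := by
          rw [sub_div, div_div]; linarith
      _ ≤ dist (x i) (x j) / K' - ε' := by gcongr
      _ ≤ _ := hφlo
  · calc dist (φ (x i)) (φ (x j)) ≤ K' * (K * |(i : ℝ) - j| + ε) + ε' :=
          hφup.trans (by gcongr)
      _ = K * K' * |(i : ℝ) - j| + (K' * ε + ε') := by ring

end IsQuasiGeodChain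

lemma IsGeodSeg.exists_quasiGeodChain {σ : Set Y} {a b : Y} (h : IsGeodSeg σ a b) :
    ∃ (n : ℕ) (μ : ℕ → Y), μ 0 = a ∧ μ n = b ∧ (∀ i, μ i ∈ σ) ∧ IsQuasiGeodChain 1 1 μ n := by
  obtain ⟨f, ⟨h0, hL, hf⟩, rfl⟩ := h
  set L := dist a b
  have hL0 : 0 ≤ L := dist_nonneg
  set s : ℕ → ℝ := fun i => min (i : ℝ) L
  have hs : ∀ i, s i ∈ Icc 0 L := fun i => ⟨le_min i.cast_nonneg hL0, min_le_right _ _⟩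
  have hs_le : ∀ i, s i ≤ i := fun i => min_le_left _ _
  have hs_ge : ∀ i ≤ ⌈L⌉₊, (i : ℝ) - 1 ≤ s i := fun i hi =>
    le_min (by linarith) (by linarith [Nat.ceil_lt_add_one hL0, (Nat.cast_le (α := ℝ)).2 hi])
  refine ⟨⌈L⌉₊, fun i => f (s i), by simpa [s, min_eq_left hL0] using h0, ?_,
    fun i => ⟨s i, hs i, rfl⟩, ?_⟩
  · simpa [s, min_eq_right (Nat.le_ceil L)] using hL
  intro i hi j hj
  simp only [hf (s i) (hs i) (s j) (hs j), div_one, one_mul]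
  have hij : |(i - j : ℝ) - (s i - s j)| ≤ 1 := by
    rw [abs_le]
    constructor <;> linarith [hs_le i, hs_le j, hs_ge i hi, hs_ge j hj]
  constructor <;> linarith [abs_sub_abs_le_abs_sub ((i : ℝ) - j) (s i - s j),
    abs_sub_abs_le_abs_sub (s i - s j) ((i : ℝ) - j), abs_sub_comm ((i : ℝ) - j) (s i - s j)]

end QuasiGeodesicChains

noncomputable def morseConst (δ K ε : ℝ) : ℝ :=
  3 * δ + K + ε + 8 * δ * (18 * K * δ + 6 * K * (K + ε) + K * ε)

lemma le_morseConst {δ K ε : ℝ} (hδ : 0 ≤ δ) (hK : 0 < K) (hε : 0 ≤ ε) {R : ℝ} {k : ℕ}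
    (hR : R ≤ 2 * δ + δ * Nat.clog 2 k + (K + ε)) (hk : (k : ℝ) ≤ K * (6 * R + ε)) :
    R ≤ morseConst δ K ε := by
  have hk' : (k : ℝ) ≤ 6 * K * δ * Nat.clog 2 k + (12 * K * δ + 6 * K * (K + ε) + K * ε) := by
    nlinarith [mul_le_mul_of_nonneg_left hR hK.le]
  have hclog := Nat.clog_two_le_of_le_mul_clog_add (by positivity) (by positivity) hk'
  have := mul_le_mul_of_nonneg_left hclog hδ
  unfold morseConst
  linarith

section Morse

variable {Y : Type*} [MetricSpace Y] {δ K ε : ℝ} {σ : Set Y}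

lemma le_dist_of_mem_geodSeg {y s z₀ w : Y} {R : ℝ} (hσ : IsGeodSeg σ y s)
    (hys : dist y s ≤ R) (hs : R ≤ dist z₀ s) (hy : 2 * R ≤ dist z₀ y ∨ y = s) (hw : w ∈ σ) :
    R ≤ dist z₀ w := by
  rcases hy with hy | rfl
  · linarith [dist_triangle z₀ w y, hσ.dist_left_le hw]
  · rwa [hσ.eq_of_mem_of_self hw]

lemma IsGeodParam.exists_fence_left {f : ℝ → Y} {a b : Y} (hf : IsGeodParam f a b) {S : Set Y}
    (ha : a ∈ S) {R : ℝ} (hnear : ∀ u ∈ Icc 0 (dist a b), ∃ s ∈ S, dist (f u) s ≤ R) {t₀ : ℝ}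
    (ht₀ : t₀ ∈ Icc 0 (dist a b)) (hfar : ∀ s ∈ S, R ≤ dist (f t₀) s) :
    ∃ u ∈ Icc 0 t₀, t₀ - u ≤ 2 * R ∧ ∃ s ∈ S, dist (f u) s ≤ R ∧
      ∀ τ : Set Y, IsGeodSeg τ (f u) s → ∀ w ∈ τ, R ≤ dist (f t₀) w := by
  have hR : 0 ≤ R := by
    obtain ⟨s, -, hs⟩ := hnear 0 ⟨le_rfl, dist_nonneg⟩
    exact dist_nonneg.trans hs
  rcases le_or_gt (2 * R) t₀ with h | h
  · have hu : t₀ - 2 * R ∈ Icc 0 (dist a b) := ⟨by linarith, by linarith [ht₀.2]⟩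
    obtain ⟨s, hs, hus⟩ := hnear _ hu
    have hdist : dist (f t₀) (f (t₀ - 2 * R)) = 2 * R := by
      rw [hf.2.2 _ ht₀ _ hu, sub_sub_cancel, abs_of_nonneg (by positivity)]
    exact ⟨_, ⟨hu.1, by linarith⟩, by linarith, s, hs, hus, fun τ hτ w hw =>
      le_dist_of_mem_geodSeg hτ hus (hfar s hs) (.inl hdist.ge) hw⟩
  · refine ⟨0, ⟨le_rfl, ht₀.1⟩, by linarith, a, ha, by simp [hf.1, hR], fun τ hτ w hw =>
      le_dist_of_mem_geodSeg hτ (by simp [hf.1, hR]) (hfar a ha) (.inr hf.1) hw⟩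

lemma IsGeodParam.exists_fence_right {f : ℝ → Y} {a b : Y} (hf : IsGeodParam f a b) {S : Set Y}
    (hb : b ∈ S) {R : ℝ} (hnear : ∀ u ∈ Icc 0 (dist a b), ∃ s ∈ S, dist (f u) s ≤ R) {t₀ : ℝ}
    (ht₀ : t₀ ∈ Icc 0 (dist a b)) (hfar : ∀ s ∈ S, R ≤ dist (f t₀) s) :
    ∃ u ∈ Icc t₀ (dist a b), u - t₀ ≤ 2 * R ∧ ∃ s ∈ S, dist s (f u) ≤ R ∧
      ∀ τ : Set Y, IsGeodSeg τ s (f u) → ∀ w ∈ τ, R ≤ dist (f t₀) w := by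
  have hnear' : ∀ u ∈ Icc 0 (dist b a), ∃ s ∈ S, dist (f (dist a b - u)) s ≤ R := fun u hu =>
    hnear _ ⟨by linarith [hu.2, dist_comm a b], by linarith [hu.1]⟩
  obtain ⟨u, hu, hut₀, s, hs, hus, hfence⟩ := hf.reverse.exists_fence_left hb hnear'
    (t₀ := dist a b - t₀) ⟨by linarith [ht₀.2], by linarith [ht₀.1, dist_comm a b]⟩
    (by simpa only [sub_sub_cancel] using hfar)
  refine ⟨dist a b - u, ⟨by linarith [hu.2], by linarith [hu.1]⟩, by linarith, s, hs,
    by rwa [dist_comm], fun τ hτ w hw => ?_⟩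
  simpa only [sub_sub_cancel] using hfence τ hτ.symm w hw

lemma IsQuasiGeodChain.exists_near_of_mem_geodSeg (hG : GeodesicSpace Y)
    (hS : SlimTriangles Y δ) (hK : 0 < K) (hε : 0 ≤ ε) {x : ℕ → Y} {n : ℕ}
    (hx : IsQuasiGeodChain K ε x n) {i j : ℕ} (hi : i ≤ n) (hj : j ≤ n)
    (hσ : IsGeodSeg σ (x i) (x j)) {z : Y} (hz : z ∈ σ) :
    ∃ k ≤ n, dist z (x k) ≤ δ * Nat.clog 2 (max i j - min i j) + (K + ε) := by
  wlog hij : i ≤ j generalizing i j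
  · simpa [max_comm, min_comm] using this hj hi hσ.symm (le_of_not_ge hij)
  obtain ⟨k, hk, hzk⟩ := hS.exists_near_chain hG (by positivity) hij
    (fun k _ hkj => hx.dist_succ_le (i := k) (by omega)) hσ hz
  exact ⟨k, hk.2.trans hj, by simpa [hij] using hzk⟩

lemma IsQuasiGeodChain.le_morseConst_of_fenced (hG : GeodesicSpace Y) (hS : SlimTriangles Y δ)
    (hδ : 0 ≤ δ) (hK : 0 < K) (hε : 0 ≤ ε) {x : ℕ → Y} {n : ℕ} (hx : IsQuasiGeodChain K ε x n)
    {R : ℝ} {z₀ y z : Y} (hfar : ∀ i ≤ n, R ≤ dist z₀ (x i)) (hσ : IsGeodSeg σ y z)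
    (hz₀ : z₀ ∈ σ) (hyz : dist y z ≤ 4 * R) {i₁ i₂ : ℕ} (hi₁ : i₁ ≤ n) (hi₂ : i₂ ≤ n)
    (hy : dist y (x i₁) ≤ R) (hz : dist (x i₂) z ≤ R)
    (hfence₁ : ∀ τ : Set Y, IsGeodSeg τ y (x i₁) → ∀ w ∈ τ, R ≤ dist z₀ w)
    (hfence₂ : ∀ τ : Set Y, IsGeodSeg τ (x i₂) z → ∀ w ∈ τ, R ≤ dist z₀ w) :
    R ≤ morseConst δ K ε := by
  have hδ_le : 2 * δ ≤ morseConst δ K ε := by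
    have : 0 ≤ 8 * δ * (18 * K * δ + 6 * K * (K + ε) + K * ε) := by positivity
    unfold morseConst
    linarith
  obtain ⟨σ₁, hσ₁⟩ := hG y (x i₁)
  obtain ⟨σ₂, hσ₂⟩ := hG (x i₁) z
  obtain ⟨σ₃, hσ₃⟩ := hG (x i₁) (x i₂)
  obtain ⟨σ₄, hσ₄⟩ := hG (x i₂) z
  obtain ⟨w₁, hw₁, hz₀w₁⟩ := hS _ _ _ σ₁ σ₂ σ hσ₁ hσ₂ hσ z₀ hz₀
  rcases hw₁ with hw₁ | hw₁
  · linarith [hfence₁ σ₁ hσ₁ w₁ hw₁]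
  obtain ⟨w₂, hw₂, hw₁w₂⟩ := hS _ _ _ σ₃ σ₄ σ₂ hσ₃ hσ₄ hσ₂ w₁ hw₁
  rcases hw₂ with hw₂ | hw₂
  swap
  · linarith [hfence₂ σ₄ hσ₄ w₂ hw₂, dist_triangle z₀ w₁ w₂]
  obtain ⟨i, hi, hw₂i⟩ := hx.exists_near_of_mem_geodSeg hG hS hK hε hi₁ hi₂ hσ₃ hw₂
  refine le_morseConst hδ hK hε (k := max i₁ i₂ - min i₁ i₂) ?_ ?_
  · linarith [hfar i hi, dist_triangle4 z₀ w₁ w₂ (x i)]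
  · have hk : ((max i₁ i₂ - min i₁ i₂ : ℕ) : ℝ) = |(i₁ : ℝ) - i₂| := by
      rw [Nat.cast_sub min_le_max, Nat.cast_max, Nat.cast_min, max_sub_min_eq_abs, abs_sub_comm]
    have h6R : dist (x i₁) (x i₂) ≤ 6 * R := by
      linarith [dist_triangle4 (x i₁) y z (x i₂), dist_comm (x i₁) y, dist_comm z (x i₂)]
    have hlo := (hx i₁ hi₁ i₂ hi₂).1
    rw [← hk] at hlo
    have hkK : ((max i₁ i₂ - min i₁ i₂ : ℕ) : ℝ) / K ≤ 6 * R + ε := by linarith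
    linarith [(div_le_iff₀ hK).1 hkK]

/-- The Morse lemma for discrete quasigeodesics. The proof looks at a point `f t₀` of the
geodesic farthest (at distance `R`) from the chain: walking `2R` along the geodesic on both
sides and then jumping to the chain fences `f t₀` off, so slim triangles put `f t₀` within `2δ`
of a geodesic between two chain points `6R` apart, and the logarithmic chain bound then yields
`R ≤ 2δ + δ log₂ (K (6R + ε)) + K + ε`. -/
theorem IsQuasiGeodChain.exists_dist_le_morseConst (hG : GeodesicSpace Y)
    (hS : SlimTriangles Y δ) (hδ : 0 ≤ δ) (hK : 0 < K) (hε : 0 ≤ ε) {x : ℕ → Y} {n : ℕ}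
    (hx : IsQuasiGeodChain K ε x n) (hσ : IsGeodSeg σ (x 0) (x n)) {z : Y} (hz : z ∈ σ) :
    ∃ i ≤ n, dist z (x i) ≤ morseConst δ K ε := by
  set S := x '' Iic n
  have hS_ne : S.Nonempty := ⟨x 0, 0, Nat.zero_le n, rfl⟩
  have hnearest : ∀ y, ∃ i ≤ n, dist y (x i) = infDist y S := fun y => by
    obtain ⟨_, ⟨i, hi, rfl⟩, h⟩ :=
      ((finite_Iic n).image x).isCompact.exists_infDist_eq_dist hS_ne y
    exact ⟨i, hi, h.symm⟩
  obtain ⟨z₀, hz₀, hmax⟩ :=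
    hσ.isCompact.exists_isMaxOn hσ.nonempty (continuous_infDist_pt S).continuousOn
  suffices hR : infDist z₀ S ≤ morseConst δ K ε by
    obtain ⟨i, hi, hzi⟩ := hnearest z
    exact ⟨i, hi, hzi ▸ (hmax hz).trans hR⟩
  obtain ⟨f, hf, rfl⟩ := hσ
  obtain ⟨t₀, ht₀, rfl⟩ := hz₀
  have hnear : ∀ u ∈ Icc 0 (dist (x 0) (x n)), ∃ s ∈ S, dist (f u) s ≤ infDist (f t₀) S :=
    fun u hu => by
      obtain ⟨i, hi, h⟩ := hnearest (f u)
      exact ⟨x i, ⟨i, hi, rfl⟩, h ▸ hmax ⟨u, hu, rfl⟩⟩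
  have hfar : ∀ s ∈ S, infDist (f t₀) S ≤ dist (f t₀) s := fun s hs => infDist_le_dist_of_mem hs
  obtain ⟨u₁, hu₁, hu₁t₀, _, ⟨i₁, hi₁, rfl⟩, hy, hfence₁⟩ :=
    hf.exists_fence_left (S := S) ⟨0, Nat.zero_le n, rfl⟩ hnear ht₀ hfar
  obtain ⟨u₂, hu₂, hu₂t₀, _, ⟨i₂, hi₂, rfl⟩, hz, hfence₂⟩ :=
    hf.exists_fence_right (S := S) ⟨n, mem_Iic.2 le_rfl, rfl⟩ hnear ht₀ hfar
  have hyz : dist (f u₁) (f u₂) ≤ 4 * infDist (f t₀) S := by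
    rw [hf.2.2 u₁ ⟨hu₁.1, hu₁.2.trans ht₀.2⟩ u₂ ⟨ht₀.1.trans hu₂.1, hu₂.2⟩,
      abs_of_nonpos (by linarith [hu₁.2, hu₂.1])]
    linarith
  exact hx.le_morseConst_of_fenced hG hS hδ hK hε (fun i hi => hfar _ ⟨i, hi, rfl⟩)
    (hf.isGeodSeg_image_Icc hu₁.1 (hu₁.2.trans hu₂.1) hu₂.2) ⟨t₀, ⟨hu₁.2, hu₂.1⟩, rfl⟩ hyz
    hi₁ hi₂ hy hz hfence₁ hfence₂

end Morse

theorem exists_near_of_mem_pushed_geodSeg {V W X : Type*} [MetricSpace V] [MetricSpace W]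
    [MetricSpace X] {δ K ε C C₂ : ℝ} (hGV : GeodesicSpace V) (hSV : SlimTriangles V δ)
    (hGW : GeodesicSpace W) (hSW : SlimTriangles W δ) (hδ : 0 ≤ δ) (hK : 1 ≤ K) (hε : 0 ≤ ε)
    (hC₂ : 0 ≤ C₂) {E : Set W}
    (hE : ∀ a ∈ E, ∀ b ∈ E, ∀ σ : Set W, IsGeodSeg σ a b → ∀ z ∈ σ, infDist z E ≤ C₂)
    {φ : W → V} (hφ : ∀ a ∈ E, ∀ b ∈ E, dist a b / K - ε ≤ dist (φ a) (φ b) ∧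
      dist (φ a) (φ b) ≤ K * dist a b + ε)
    {iV : V → X} {iW : W → X} (hiV : ∀ x y, dist (iV x) (iV y) ≤ dist x y)
    (hiW : ∀ x y, dist (iW x) (iW y) ≤ dist x y) (hmove : ∀ a ∈ E, dist (iW a) (iV (φ a)) ≤ 1)
    {lamW : Set W} {aW bW : W} (hlamW : IsGeodSeg lamW aW bW) {p q : W} (hp : p ∈ E)
    (hq : q ∈ E) (hpC : infDist p lamW ≤ C) (hqC : infDist q lamW ≤ C) {lamV : Set V}
    (hlamV : IsGeodSeg lamV (φ p) (φ q)) {x : V} (hx : x ∈ lamV) :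
    ∃ y ∈ lamW, dist (iV x) (iW y) ≤
      morseConst δ K (K * (2 * C₂ + 3) + ε) + C₂ + C + 2 * δ + 2 := by
  obtain ⟨σ, hσ⟩ := hGW p q
  obtain ⟨n, μ, hμ0, hμn, hμσ, hμ⟩ := hσ.exists_quasiGeodChain
  have hE_near : ∀ i, ∃ e ∈ E, dist (μ i) e ≤ C₂ + 1 ∧ (μ i ∈ E → e = μ i) := fun i => by
    by_cases hi : μ i ∈ E
    · exact ⟨μ i, hi, by rw [dist_self]; linarith, fun _ => rfl⟩
    · obtain ⟨e, he, hμe⟩ := (infDist_lt_iff ⟨p, hp⟩).1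
        ((hE p hp q hq σ hσ _ (hμσ i)).trans_lt (lt_add_one C₂))
      exact ⟨e, he, hμe.le, fun h => absurd h hi⟩
  choose e he hμe he_eq using hE_near
  have he0 : e 0 = p := by rw [he_eq 0 (hμ0 ▸ hp), hμ0]
  have hen : e n = q := by rw [he_eq n (hμn ▸ hq), hμn]
  have hg := (hμ.of_dist_le fun i _ => hμe i).map (by positivity) (fun i _ => he i) hK hφ
  rw [one_mul, show K * (1 + 2 * (C₂ + 1)) + ε = K * (2 * C₂ + 3) + ε by ring] at hg
  obtain ⟨i, -, hxi⟩ := hg.exists_dist_le_morseConst hGV hSV hδ (by positivity) (by positivity)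
    (by simpa [he0, hen] using hlamV) hx
  obtain ⟨y, hy, hμy⟩ := hSW.exists_near_of_infDist_le hGW hδ hlamW hpC hqC hσ (hμσ i)
  refine ⟨y, hy, ?_⟩
  calc dist (iV x) (iW y)
      ≤ dist (iV x) (iV (φ (e i))) + dist (iW (e i)) (iV (φ (e i))) + dist (iW (e i)) (iW y) := by
        linarith [dist_triangle4 (iV x) (iV (φ (e i))) (iW (e i)) (iW y),
          dist_comm (iV (φ (e i))) (iW (e i))]
    _ ≤ dist x (φ (e i)) + 1 + dist (e i) y := by
        gcongr
        exacts [hiV _ _, hmove _ (he i), hiW _ _]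
    _ ≤ _ := by
        linarith [dist_triangle (e i) (μ i) y, dist_comm (e i) (μ i), hμe i,
          show dist x (φ (e i)) ≤ _ from hxi]

lemma exists_mem_dist_le_mul_of_step {ι X : Type*} [PseudoMetricSpace X] {S : ι → Set X}
    {I : Set ι} {i₀ : ι} {ℓ : ι → ℕ} {A : ℝ} (hA : 0 ≤ A)
    (hstep : ∀ i ∈ I, i ≠ i₀ → ∃ j ∈ I, ℓ j + 1 = ℓ i ∧ ∀ x ∈ S i, ∃ y ∈ S j, dist x y ≤ A)
    {i : ι} (hi : i ∈ I) {x : X} (hx : x ∈ S i) : ∃ y ∈ S i₀, dist x y ≤ A * ℓ i := by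
  obtain ⟨m, hm⟩ : ∃ m, ℓ i = m := ⟨_, rfl⟩
  induction m generalizing i x with
  | zero =>
    by_cases hi₀ : i = i₀
    · exact ⟨x, hi₀ ▸ hx, by rw [dist_self]; positivity⟩
    · obtain ⟨j, -, hj, -⟩ := hstep i hi hi₀
      omega
  | succ m ih =>
    by_cases hi₀ : i = i₀
    · exact ⟨x, hi₀ ▸ hx, by rw [dist_self]; positivity⟩
    obtain ⟨j, hjI, hj, hxj⟩ := hstep i hi hi₀
    obtain ⟨y', hy', hxy'⟩ := hxj x hx
    obtain ⟨y, hy, hy'y⟩ := ih hjI hy' (by omega)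
    refine ⟨y, hy, ?_⟩
    rw [← hj, Nat.cast_succ]
    linarith [dist_triangle x y' y]

lemma MitraLadder.exists_parent_near {δ K ε C C₂ D : ℝ} (hδ : 0 ≤ δ) (hK : 1 ≤ K) (hε : 0 ≤ ε)
    (hC₂ : 0 ≤ C₂) {T : Type} {Gr : SimpleGraph T} {X : Type} [MetricSpace X] {P : X → T}
    {Xv : T → Type} [∀ v, MetricSpace (Xv v)] {iv : ∀ v, Xv v → X}
    {Ed : ∀ v w, Gr.Adj v w → Set (Xv v)} {φ : ∀ v w, Gr.Adj v w → Xv v → Xv w}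
    (hTS : TreeOfSpaces δ K ε C₂ T Gr X P Xv iv Ed φ) {v₀ : T} {lam : Set (Xv v₀)}
    {a₀ b₀ : Xv v₀} {T₁ : Set T} {lamv : ∀ v, Set (Xv v)} {B : Set X}
    (hML : MitraLadder C D T Gr X P Xv iv Ed φ v₀ lam a₀ b₀ T₁ lamv B) {v : T} (hv : v ∈ T₁)
    (hv₀ : v ≠ v₀) :
    ∃ w ∈ T₁, Gr.dist v₀ w + 1 = Gr.dist v₀ v ∧ ∀ a ∈ iv v '' lamv v, ∃ b ∈ iv w '' lamv w,
      dist a b ≤ morseConst δ K (K * (2 * C₂ + 3) + ε) + C₂ + C + 2 * δ + 2 := by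
  obtain ⟨-, -, -, -, -, hlip, -, hGv, hSv, hqc, hqi, hglue⟩ := hTS
  obtain ⟨-, -, -, -, -, hgeod, hparent⟩ := hML
  obtain ⟨w, h, hw, hlevel, p, hp, q, hq, hpC, hqC, -, hlamv⟩ := hparent v hv hv₀
  obtain ⟨aw, bw, hlamw⟩ := hgeod w hw
  refine ⟨w, hw, hlevel, ?_⟩
  rintro _ ⟨x, hx, rfl⟩
  obtain ⟨y, hy, hxy⟩ := exists_near_of_mem_pushed_geodSeg (hGv v) (hSv v) (hGv w) (hSv w) hδ
    hK hε hC₂ (hqc w v h) (hqi w v h) (hlip v) (hlip w) (fun a ha => (hglue w v h a ha).2.2)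
    hlamw hp hq hpC hqC hlamv hx
  exact ⟨iv w y, ⟨y, hy, rfl⟩, hxy⟩

theorem stmt12_general (δ K ε C C₂ D : ℝ) (hδ : 0 ≤ δ) (hK : 1 ≤ K) (hε : 0 ≤ ε)
    (hC₂ : 0 ≤ C₂) (hC : 0 ≤ C) :
    ∃ A : ℝ, 0 < A ∧
      ∀ (T : Type) (Gr : SimpleGraph T)
        (X : Type) (_ : MetricSpace X) (P : X → T)
        (Xv : T → Type) (_ : ∀ v, MetricSpace (Xv v))
        (iv : ∀ v, Xv v → X)
        (Ed : ∀ v w, Gr.Adj v w → Set (Xv v))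
        (φ : ∀ v w, Gr.Adj v w → Xv v → Xv w),
        TreeOfSpaces δ K ε C₂ T Gr X P Xv iv Ed φ →
        ∀ (v₀ : T) (lam : Set (Xv v₀)) (a₀ b₀ : Xv v₀)
          (T₁ : Set T) (lamv : ∀ v, Set (Xv v)) (B : Set X),
          MitraLadder C D T Gr X P Xv iv Ed φ v₀ lam a₀ b₀ T₁ lamv B →
          ∀ a ∈ B, ∃ b ∈ iv v₀ '' lam,
            dist a b ≤ A * (Gr.dist (P a) (P b) : ℝ) := by
  have hM : 0 ≤ morseConst δ K (K * (2 * C₂ + 3) + ε) := by unfold morseConst; positivity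
  refine ⟨morseConst δ K (K * (2 * C₂ + 3) + ε) + C₂ + C + 2 * δ + 2, by positivity, ?_⟩
  intro T Gr X _ P Xv _ iv Ed φ hTS v₀ lam a₀ b₀ T₁ lamv B hML a ha
  obtain ⟨-, -, -, hrange, -⟩ := id hTS
  obtain ⟨-, hlam, -, -, hB, -⟩ := id hML
  have hP : ∀ v (x : Xv v), P (iv v x) = v := fun v x => by
    simpa using (hrange v ▸ mem_range_self x : iv v x ∈ P ⁻¹' {v})
  obtain ⟨v, hv, x, hx, rfl⟩ : ∃ v ∈ T₁, ∃ x ∈ lamv v, iv v x = a := by simpa [hB] using ha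
  obtain ⟨_, ⟨y, hy, rfl⟩, hxy⟩ := exists_mem_dist_le_mul_of_step (ℓ := Gr.dist v₀)
    (by positivity) (fun v hv hv₀ => hML.exists_parent_near hδ hK hε hC₂ hTS hv hv₀) hv
    ⟨x, hx, rfl⟩
  refine ⟨iv v₀ y, ⟨y, hlam ▸ hy, rfl⟩, ?_⟩
  rwa [hP, hP, SimpleGraph.dist_comm]

/-- Every point of Mitra's ladder `B_λ` can be connected back to the base geodesic
`i_{v₀}(λ)`, moving a uniformly bounded distance `A` per level of the tree. -/
theorem stmt12 (δ K ε C C₂ D : ℝ) (hδ : 0 ≤ δ) (hK : 1 ≤ K) (hε : 0 ≤ ε)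
    (hC₂ : 0 ≤ C₂) (hC : 0 ≤ C) (hD : 0 ≤ D) :
    ∃ A : ℝ, 0 < A ∧
      ∀ (T : Type) (Gr : SimpleGraph T)
        (X : Type) (_ : MetricSpace X) (P : X → T)
        (Xv : T → Type) (_ : ∀ v, MetricSpace (Xv v))
        (iv : ∀ v, Xv v → X)
        (Ed : ∀ v w, Gr.Adj v w → Set (Xv v))
        (φ : ∀ v w, Gr.Adj v w → Xv v → Xv w),
        TreeOfSpaces δ K ε C₂ T Gr X P Xv iv Ed φ →
        ∀ (v₀ : T) (lam : Set (Xv v₀)) (a₀ b₀ : Xv v₀)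
          (T₁ : Set T) (lamv : ∀ v, Set (Xv v)) (B : Set X),
          MitraLadder C D T Gr X P Xv iv Ed φ v₀ lam a₀ b₀ T₁ lamv B →
          ∀ a ∈ B, ∃ b ∈ iv v₀ '' lam,
            dist a b ≤ A * (Gr.dist (P a) (P b) : ℝ) :=
  stmt12_general δ K ε C C₂ D hδ hK hε hC₂ hC
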